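/- arXiv:2506.23373 — 5 statements merged into one kernel-verified Lean document; each statement's English description precedes it below -/
import Mathlib

section
/- Let p = (p_1, …, p_n) be a weakly increasing sequence of positive integers having r distinct values, where the value i occurs exactly m_i times (so n = m_1 + ⋯ + m_r). Then the sum of t^{inv(w)} over all rearrangements w of p (as a multiset word) equals the t-multinomial coefficient [n choose m_1, …, m_r]_t, where inv(w) = #{(i,j) : i < j and w_i > w_j}. -/
/-- inversion number of a word: pairs i < j with w_i > w_j. -/
def invCount (w : List ℕ) : ℕ :=
  ((Finset.range w.length ×ˢ Finset.range w.length).filter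
    (fun ij => ij.1 < ij.2 ∧ w.getD ij.2 0 < w.getD ij.1 0)).card

/-- t-factorial `[k]_t!` as a polynomial in `t = X`. -/
noncomputable def qFact : ℕ → Polynomial ℕ
  | 0 => 1
  | (k+1) => qFact k * ∑ i ∈ Finset.range (k+1), Polynomial.X ^ i

/-!
Split the rearrangements `w` of `p` by their first letter `a`: then
`inv (a :: w') = #{letters of w' smaller than a} + inv w'`, where `w'` runs over the rearrangements
of `p` with one `a` removed. By induction on the length, each inner sum times the remaining
t-factorials is `[n-1]_t!`, and the factor `[m_a]_t` peeled off `[m_a]_t!` combines with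
`t ^ #{letters < a}` into the geometric sum over the block of positions that the letter `a` occupies
in the sorted word. These blocks partition `{0, …, n-1}`, so the total is `[n]_t [n-1]_t! = [n]_t!`.
-/

open Finset Polynomial

lemma invCount_eq_sum (w : List ℕ) :
    invCount w = ∑ i ∈ range w.length, ∑ j ∈ range w.length,
      if i < j ∧ w.getD j 0 < w.getD i 0 then 1 else 0 := by
  rw [invCount, card_filter, sum_product]

lemma List.countP_eq_sum_range_getD {α : Type*} (q : α → Bool) (l : List α) (d : α) :
    l.countP q = ∑ j ∈ Finset.range l.length, if q (l.getD j d) then 1 else 0 := by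
  induction l with
  | nil => rfl
  | cons a l ih =>
    rw [List.countP_cons, ih, List.length_cons, Finset.sum_range_succ']
    simp only [List.getD_cons_succ, List.getD_cons_zero]

lemma invCount_cons (a : ℕ) (l : List ℕ) :
    invCount (a :: l) = l.countP (· < a) + invCount l := by
  rw [invCount_eq_sum, invCount_eq_sum, List.countP_eq_sum_range_getD _ _ 0, List.length_cons,
    sum_range_succ', add_comm]
  simp only [sum_range_succ' _ l.length, List.getD_cons_succ, List.getD_cons_zero,
    Nat.succ_lt_succ_iff, Nat.lt_irrefl, Nat.not_lt_zero, Nat.zero_lt_succ, false_and, true_and,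
    if_false, add_zero, decide_eq_true_eq]

section GeomSum

variable {α R : Type*} [LinearOrder α] [CommSemiring R] (t : R)

lemma pow_countP_lt_mul_geom_sum_cons {b : α} {l : List α} (hb : ∀ x ∈ l, b ≤ x) (a : α) :
    t ^ (b :: l).countP (· < a) * ∑ j ∈ range ((b :: l).count a), t ^ j
      = (if a = b then 1 else 0) + t * (t ^ l.countP (· < a) * ∑ j ∈ range (l.count a), t ^ j) := by
  rcases lt_trichotomy a b with hab | rfl | hab
  · have : l.count a = 0 := List.count_eq_zero.2 fun ha => (hb a ha).not_gt hab
    simp [this, hab.ne, hab.ne']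
  · have : l.countP (· < a) = 0 := List.countP_eq_zero.2 fun x hx => by simpa using hb x hx
    simp [this, geom_sum_succ, add_comm]
  · simp [hab, hab.ne, hab.ne', pow_succ']
    ring

lemma sum_pow_countP_lt_mul_geom_sum_of_pairwise {l : List α} (hl : l.Pairwise (· ≤ ·))
    {s : Finset α} (hs : l.toFinset ⊆ s) :
    ∑ a ∈ s, t ^ l.countP (· < a) * ∑ j ∈ range (l.count a), t ^ j
      = ∑ j ∈ range l.length, t ^ j := by
  induction l with
  | nil => simp
  | cons b l ih =>
    rw [List.pairwise_cons] at hl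
    rw [List.toFinset_cons, insert_subset_iff] at hs
    simp_rw [pow_countP_lt_mul_geom_sum_cons t hl.1, sum_add_distrib, sum_ite_eq', if_pos hs.1,
      ← mul_sum, ih hl.2 hs.2, List.length_cons, geom_sum_succ, add_comm]

lemma sum_toFinset_pow_countP_lt_mul_geom_sum (l : List α) :
    ∑ a ∈ l.toFinset, t ^ l.countP (· < a) * ∑ j ∈ range (l.count a), t ^ j
      = ∑ j ∈ range l.length, t ^ j := by
  have hperm := List.perm_insertionSort (· ≤ ·) l
  simp_rw [← hperm.countP_eq, ← hperm.count_eq, ← hperm.length_eq]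
  exact sum_pow_countP_lt_mul_geom_sum_of_pairwise t (List.pairwise_insertionSort _ l)
    (List.toFinset_eq_of_perm _ _ hperm).le

end GeomSum

lemma sum_permutations_toFinset_eq_sum_cons {α M : Type*} [DecidableEq α] [AddCommMonoid M]
    {l : List α} (hl : l ≠ []) (f : List α → M) :
    ∑ w ∈ l.permutations.toFinset, f w
      = ∑ a ∈ l.toFinset, ∑ w ∈ (l.erase a).permutations.toFinset, f (a :: w) := by
  have ne_nil : ∀ w ∈ l.permutations.toFinset, w ≠ [] := by
    rintro w hw rfl
    exact hl (by simpa [eq_comm] using hw)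
  rw [sum_sigma']
  refine sum_bij' (fun w hw => ⟨w.head (ne_nil w hw), w.tail⟩) (fun x _ => x.1 :: x.2)
    (fun w hw => ?_) (fun x hx => ?_) (fun w hw => List.cons_head_tail _) (fun x _ => rfl)
    (fun w hw => by rw [List.cons_head_tail])
  · have hw_ne := ne_nil w hw
    rw [List.mem_toFinset, List.mem_permutations, ← List.cons_head_tail hw_ne,
      List.cons_perm_iff_perm_erase] at hw
    simpa using hw
  · rw [mem_sigma, List.mem_toFinset, List.mem_toFinset, List.mem_permutations] at hx
    rw [List.mem_toFinset, List.mem_permutations, List.cons_perm_iff_perm_erase]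
    exact ⟨hx.1, hx.2⟩

lemma qFact_succ (k : ℕ) : qFact (k + 1) = qFact k * ∑ i ∈ range (k + 1), (X : ℕ[X]) ^ i := rfl

lemma prod_qFact_count_eq_mul_prod_qFact_count_erase {α : Type*} [DecidableEq α] {l : List α}
    {a : α} (ha : a ∈ l) {s : Finset α} (hs : a ∈ s) :
    ∏ i ∈ s, qFact (l.count i)
      = (∑ j ∈ range (l.count a), (X : ℕ[X]) ^ j) * ∏ i ∈ s, qFact ((l.erase a).count i) := by
  have factor : ∀ i, qFact (l.count i) = (if i = a then ∑ j ∈ range (l.count a), X ^ j else 1) *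
      qFact ((l.erase a).count i) := by
    intro i
    by_cases hi : i = a
    · subst hi
      obtain ⟨k, hk⟩ := Nat.exists_eq_add_one_of_ne_zero (List.count_pos_iff.2 ha).ne'
      rw [if_pos rfl, List.count_erase_self, hk, qFact_succ, Nat.add_sub_cancel, mul_comm]
    · rw [if_neg hi, one_mul, List.count_erase_of_ne hi]
  rw [prod_congr rfl fun i _ => factor i, prod_mul_distrib, prod_ite_eq', if_pos hs]

theorem sum_permutations_X_pow_invCount_mul_prod_qFact (l : List ℕ) {s : Finset ℕ}
    (hs : l.toFinset ⊆ s) :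
    (∑ w ∈ l.permutations.toFinset, (X : ℕ[X]) ^ invCount w) * ∏ i ∈ s, qFact (l.count i)
      = qFact l.length := by
  induction hn : l.length generalizing l with
  | zero =>
    rw [List.length_eq_zero_iff.1 hn]
    simp [invCount, qFact]
  | succ n ih =>
    have cons_term : ∀ a ∈ l.toFinset,
        (∑ w ∈ (l.erase a).permutations.toFinset, (X : ℕ[X]) ^ invCount (a :: w)) *
            ∏ i ∈ s, qFact (l.count i)
          = X ^ l.countP (· < a) * (∑ j ∈ range (l.count a), X ^ j) * qFact n := by
      intro a ha
      rw [List.mem_toFinset] at ha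
      have inv_cons : ∀ w ∈ (l.erase a).permutations.toFinset,
          invCount (a :: w) = l.countP (· < a) + invCount w := by
        intro w hw
        rw [List.mem_toFinset, List.mem_permutations] at hw
        rw [invCount_cons, hw.countP_eq, List.countP_erase]
        simp
      have hsub : (l.erase a).toFinset ⊆ s := fun x hx =>
        hs (List.mem_toFinset.2 (List.erase_subset (List.mem_toFinset.1 hx)))
      rw [sum_congr rfl fun w hw => by rw [inv_cons w hw, pow_add], ← mul_sum,
        prod_qFact_count_eq_mul_prod_qFact_count_erase ha (hs (List.mem_toFinset.2 ha)),
        ← ih (l.erase a) hsub (by rw [List.length_erase_of_mem ha, hn]; rfl)]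
      ring
    have hl : l ≠ [] := by rintro rfl; simp at hn
    rw [sum_permutations_toFinset_eq_sum_cons hl, sum_mul, sum_congr rfl cons_term, ← sum_mul,
      sum_toFinset_pow_countP_lt_mul_geom_sum, hn, qFact_succ, mul_comm]

theorem sum_t_inv_eq_t_multinomial_general
    (p : List ℕ)
    (r : ℕ) (m : ℕ → ℕ)
    (hcount : ∀ i, p.count i = if 1 ≤ i ∧ i ≤ r then m i else 0) :
    (∑ w ∈ p.permutations.toFinset, (Polynomial.X : Polynomial ℕ) ^ invCount w) *
        ∏ i ∈ Finset.Icc 1 r, qFact (m i)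
      = qFact p.length := by
  have support_subset : p.toFinset ⊆ Icc 1 r := by
    intro i hi
    have count_pos := List.count_pos_iff.2 (List.mem_toFinset.1 hi)
    rw [hcount i] at count_pos
    by_contra h
    rw [if_neg (by simpa using h)] at count_pos
    exact count_pos.false
  rw [← sum_permutations_X_pow_invCount_mul_prod_qFact p support_subset]
  congr 1
  refine prod_congr rfl fun i hi => ?_
  rw [hcount i, if_pos (mem_Icc.1 hi)]

/-- MacMahon: for a weakly increasing word `p` with entries in `{1,…,r}`, the value `i`
occurring `m i` times, the sum of `t^{inv w}` over all distinct rearrangements `w` of `p`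
equals the t-multinomial `[n]_t!/([m 1]_t! ⋯ [m r]_t!)`, stated multiplicatively. -/
theorem sum_t_inv_eq_t_multinomial
    (p : List ℕ) (hsorted : p.Pairwise (· ≤ ·)) (hpos : ∀ x ∈ p, 0 < x)
    (r : ℕ) (m : ℕ → ℕ)
    (hcount : ∀ i, p.count i = if 1 ≤ i ∧ i ≤ r then m i else 0) :
    (∑ w ∈ p.permutations.toFinset, (Polynomial.X : Polynomial ℕ) ^ invCount w) *
        ∏ i ∈ Finset.Icc 1 r, qFact (m i)
      = qFact p.length :=
  sum_t_inv_eq_t_multinomial_general p r m hcount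
end

section
/- Fix a ≥ 1 and a weakly decreasing upper row. Let σ be a two-row array of width k whose top row is the constant sequence (a, …, a) and whose bottom row p starts with all entries < a in weakly decreasing order followed by all entries ≥ a in arbitrary order. Let w be a rearrangement of p preserving the relative order of entries ≥ a. Then the difference quinv(τ) − quinv(σ), where τ has bottom row w and the same top row, equals #{(i,j): i<j, w_j < a ≤ w_i} + #{(i,j): i<j, w_i < w_j < a}. -/
/-- Queue inversion triple condition on naturals: `a` above `b`, `c` to the right of `b`. -/
abbrev qtripleN (a b c : ℕ) : Prop :=
  (a < b ∧ b < c) ∨ (b < c ∧ c < a) ∨ (c < a ∧ a < b) ∨ (a = b ∧ b ≠ c)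

/-- quinv of a two-row rectangular array of width `k` (bottom row = `bot`, top row =
`top`, a row of zeros appended above `top`). -/
def quinv2 (k : ℕ) (top bot : ℕ → ℕ) : ℕ :=
  ((Finset.range k ×ˢ Finset.range k).filter
    (fun ij => ij.1 < ij.2 ∧ qtripleN 0 (top ij.1) (top ij.2))).card
  + ((Finset.range k ×ˢ Finset.range k).filter
    (fun ij => ij.1 < ij.2 ∧ qtripleN (top ij.1) (bot ij.1) (bot ij.2))).card

/-!
Against a constant top row `a` the top row itself carries no queue inversion, and a queue
inversion in the bottom row is an ascent of two entries `≥ a`, a descent from an entry `≥ a` to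
one `< a`, or an ascent of two entries `< a`. In `p` the last two kinds do not occur, since its
entries `< a` come first and weakly decrease; the first kind is counted equally in `w` and `p`,
since `w` lists the entries `≥ a` in the same order.
-/

open Finset

def pairsWith (k : ℕ) (P : ℕ → ℕ → Prop) [DecidableRel P] : Finset (ℕ × ℕ) :=
  (range k ×ˢ range k).filter fun ij => ij.1 < ij.2 ∧ P ij.1 ij.2

theorem mem_pairsWith {k : ℕ} {P : ℕ → ℕ → Prop} [DecidableRel P] {ij : ℕ × ℕ} :
    ij ∈ pairsWith k P ↔ ij.1 < k ∧ ij.2 < k ∧ ij.1 < ij.2 ∧ P ij.1 ij.2 := by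
  simp [pairsWith, and_assoc]

theorem card_pairsWith_eq_card_fin (k : ℕ) (P : ℕ → ℕ → Prop) [DecidableRel P] :
    #(pairsWith k P) = #{ij : Fin k × Fin k | ij.1 < ij.2 ∧ P ij.1 ij.2} := by
  symm
  refine card_bij (fun ij _ => (ij.1.val, ij.2.val)) ?_ ?_ ?_
  · intro ij hij
    simp only [mem_filter, mem_univ, true_and] at hij
    exact mem_pairsWith.2 ⟨ij.1.isLt, ij.2.isLt, hij⟩
  · intro ij _ ij' _ h
    simp only [Prod.mk.injEq] at h
    exact Prod.ext (Fin.ext h.1) (Fin.ext h.2)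
  · intro ij hij
    obtain ⟨hi, hj, hlt, hP⟩ := mem_pairsWith.1 hij
    exact ⟨(⟨ij.1, hi⟩, ⟨ij.2, hj⟩), by simpa using ⟨hlt, hP⟩, rfl⟩

theorem card_filter_lt_eq_of_strictMonoOn {α : Type*} [Fintype α] [LinearOrder α]
    (e : Equiv.Perm α) {s : Set α} (he : StrictMonoOn e s)
    (R S : α → α → Prop) [DecidableRel R] [DecidableRel S]
    (hRs : ∀ i j, R i j → i ∈ s ∧ j ∈ s) (hRS : ∀ i j, R i j ↔ S (e i) (e j)) :
    #{ij : α × α | ij.1 < ij.2 ∧ R ij.1 ij.2} = #{ij : α × α | ij.1 < ij.2 ∧ S ij.1 ij.2} := by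
  refine card_nbij' (Prod.map e e) (Prod.map e.symm e.symm) ?_ ?_ ?_ ?_
  · rintro ⟨i, j⟩ hij
    simp only [coe_filter, mem_univ, true_and, Set.mem_ofPred_eq, Prod.map] at hij ⊢
    obtain ⟨hi, hj⟩ := hRs i j hij.2
    exact ⟨he hi hj hij.1, (hRS i j).1 hij.2⟩
  · rintro ⟨i, j⟩ hij
    simp only [coe_filter, mem_univ, true_and, Set.mem_ofPred_eq, Prod.map] at hij ⊢
    have hR : R (e.symm i) (e.symm j) := (hRS _ _).2 (by simpa using hij.2)
    obtain ⟨hi, hj⟩ := hRs _ _ hR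
    exact ⟨(he.lt_iff_lt hi hj).1 (by simpa using hij.1), hR⟩
  · exact fun ij _ => Prod.ext (e.symm_apply_apply ij.1) (e.symm_apply_apply ij.2)
  · exact fun ij _ => Prod.ext (e.apply_symm_apply ij.1) (e.apply_symm_apply ij.2)

theorem quinv2_const_top (k a : ℕ) (v : ℕ → ℕ) :
    quinv2 k (fun _ => a) v = #(pairsWith k fun i j => qtripleN a (v i) (v j)) := by
  have hnone : ∀ ij : ℕ × ℕ, ¬ (ij.1 < ij.2 ∧ qtripleN 0 a a) := by
    intro ij
    simp only [qtripleN]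
    omega
  simp only [quinv2, filter_false_of_mem fun ij _ => hnone ij, card_empty, zero_add]
  rfl

theorem card_pairsWith_qtripleN (k a : ℕ) (v : ℕ → ℕ) :
    #(pairsWith k fun i j => qtripleN a (v i) (v j)) =
      #(pairsWith k fun i j => a ≤ v i ∧ a ≤ v j ∧ v i < v j)
      + #(pairsWith k fun i j => v j < a ∧ a ≤ v i)
      + #(pairsWith k fun i j => v i < v j ∧ v j < a) := by
  simp only [pairsWith, card_filter, ← sum_add_distrib]
  refine sum_congr rfl fun ij _ => ?_
  split_ifs <;> omega

section TwoBlocks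

variable {k a m : ℕ} {p : ℕ → ℕ}

theorem pairsWith_high_low_eq_empty (hlow : ∀ i < m, p i < a)
    (hhigh : ∀ i, m ≤ i → i < k → a ≤ p i) :
    pairsWith k (fun i j => p j < a ∧ a ≤ p i) = ∅ := by
  refine eq_empty_of_forall_notMem fun ij hij => ?_
  obtain ⟨-, hj, hlt, hpj, hpi⟩ := mem_pairsWith.1 hij
  by_cases him : ij.1 < m
  · exact absurd hpi (not_le.2 (hlow _ him))
  · exact absurd hpj (not_lt.2 (hhigh _ (by omega) hj))

theorem pairsWith_low_ascent_eq_empty (hhigh : ∀ i, m ≤ i → i < k → a ≤ p i)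
    (hdec : ∀ i j, i ≤ j → j < m → p j ≤ p i) :
    pairsWith k (fun i j => p i < p j ∧ p j < a) = ∅ := by
  refine eq_empty_of_forall_notMem fun ij hij => ?_
  obtain ⟨-, hj, hlt, hpij, hpj⟩ := mem_pairsWith.1 hij
  have hjm : ij.2 < m := by
    by_contra! hjm
    exact absurd (hhigh _ hjm hj) (not_le.2 hpj)
  exact absurd (hdec _ _ hlt.le hjm) (not_le.2 hpij)

end TwoBlocks

theorem card_pairsWith_high_ascent_perm {k a : ℕ} {p w : ℕ → ℕ} (e : Equiv.Perm (Fin k))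
    (hw : ∀ i : Fin k, w i.val = p ((e i).val))
    (hpres : ∀ i j : Fin k, i < j → a ≤ w i.val → a ≤ w j.val → e i < e j) :
    #(pairsWith k fun i j => a ≤ w i ∧ a ≤ w j ∧ w i < w j) =
      #(pairsWith k fun i j => a ≤ p i ∧ a ≤ p j ∧ p i < p j) := by
  rw [card_pairsWith_eq_card_fin, card_pairsWith_eq_card_fin]
  exact card_filter_lt_eq_of_strictMonoOn e (s := {i | a ≤ w i})
    (fun i hi j hj hij => hpres i j hij hi hj)
    (fun i j => a ≤ w i ∧ a ≤ w j ∧ w i < w j) (fun i j => a ≤ p i ∧ a ≤ p j ∧ p i < p j)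
    (fun _ _ h => ⟨h.1, h.2.1⟩) fun i j => by simp only [hw]

theorem quinv_difference_two_row_general
    (k a m : ℕ) (p w : ℕ → ℕ)
    (hlow : ∀ i < m, p i < a)
    (hhigh : ∀ i, m ≤ i → i < k → a ≤ p i)
    (hdec : ∀ i j, i ≤ j → j < m → p j ≤ p i)
    (e : Equiv.Perm (Fin k)) (hw : ∀ i : Fin k, w i.val = p ((e i).val))
    (hpres : ∀ i j : Fin k, i < j → a ≤ w i.val → a ≤ w j.val → e i < e j) :
    quinv2 k (fun _ => a) w =
      quinv2 k (fun _ => a) p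
      + ((Finset.range k ×ˢ Finset.range k).filter
          (fun ij => ij.1 < ij.2 ∧ w ij.2 < a ∧ a ≤ w ij.1)).card
      + ((Finset.range k ×ˢ Finset.range k).filter
          (fun ij => ij.1 < ij.2 ∧ w ij.1 < w ij.2 ∧ w ij.2 < a)).card := by
  change _ = _ + #(pairsWith k fun i j => w j < a ∧ a ≤ w i)
    + #(pairsWith k fun i j => w i < w j ∧ w j < a)
  rw [quinv2_const_top, quinv2_const_top, card_pairsWith_qtripleN, card_pairsWith_qtripleN,
    pairsWith_high_low_eq_empty hlow hhigh, pairsWith_low_ascent_eq_empty hhigh hdec,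
    card_pairsWith_high_ascent_perm e hw hpres, card_empty, add_zero, add_zero]

/-- For a two-row array with constant top row `a`, bottom row `p` starting with all its
entries `< a` in weakly decreasing order followed by its entries `≥ a`, and `w` a
rearrangement of `p` preserving the relative order of entries `≥ a`:
`quinv τ − quinv σ = #{i<j : w_j < a ≤ w_i} + #{i<j : w_i < w_j < a}`. -/
theorem quinv_difference_two_row
    (k a m : ℕ) (ha : 1 ≤ a) (hm : m ≤ k) (p w : ℕ → ℕ)
    (hlow : ∀ i < m, p i < a)
    (hhigh : ∀ i, m ≤ i → i < k → a ≤ p i)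
    (hdec : ∀ i j, i ≤ j → j < m → p j ≤ p i)
    (e : Equiv.Perm (Fin k)) (hw : ∀ i : Fin k, w i.val = p ((e i).val))
    (hpres : ∀ i j : Fin k, i < j → a ≤ w i.val → a ≤ w j.val → e i < e j) :
    quinv2 k (fun _ => a) w =
      quinv2 k (fun _ => a) p
      + ((Finset.range k ×ˢ Finset.range k).filter
          (fun ij => ij.1 < ij.2 ∧ w ij.2 < a ∧ a ≤ w ij.1)).card
      + ((Finset.range k ×ˢ Finset.range k).filter
          (fun ij => ij.1 < ij.2 ∧ w ij.1 < w ij.2 ∧ w ij.2 < a)).card :=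
  quinv_difference_two_row_general k a m p w hlow hhigh hdec e hw hpres
end

section
/- In the set S_2 (a specific quinv-quadruple set), for any quadruple (z,w,u,v) with all four entries positive integers, the following identity of indicator functions holds for the difference between quinv-triple counting and S_2-quadruple counting: Q(z,u,v) − Q_{S_2}(z,w,u,v) = χ(v>u≥w>z) + χ(z>v>u≥w) + χ(w>z>v>u) + χ(u≥z>w>v) − χ(v≥z>w>u) − χ(z>u>v≥w) − χ(u>v≥w>z) − χ(w>z>u>v), where Q(z,u,v) = 1 iff (z>v>u) or (u≥z>v) or (v>u≥z), and Q_{S_2}(z,w,u,v) = 1 iff the total ordering of (z,w,u,v) lies in S_2. -/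
set_option maxHeartbeats 2000000


/-- The `z > w` part of the quinv-quadruple set `S_2`. -/
abbrev S2D (z w u v : ℕ) : Prop :=
  z > w ∧ ((z > v ∧ v ≥ w ∧ w > u) ∨ (u ≥ z ∧ z > v ∧ v ≥ w) ∨ (z > w ∧ w > v ∧ v > u)
    ∨ (v > u ∧ u ≥ z ∧ z > w) ∨ (z > u ∧ u > v ∧ v ≥ w) ∨ (v ≥ z ∧ z > w ∧ w > u))

/-- The quinv-quadruple set `S_2`. -/
abbrev S2 (z w u v : ℕ) : Prop :=
  (z = w ∧ ((z > v ∧ v > u) ∨ (u ≥ z ∧ z > v) ∨ (v > u ∧ u ≥ z))) ∨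
    S2D z w u v ∨ S2D w z v u

/-- The queue inversion triple condition `Q(z,u,v)`. -/
abbrev Qtri (z u v : ℕ) : Prop :=
  (z > v ∧ v > u) ∨ (u ≥ z ∧ z > v) ∨ (v > u ∧ u ≥ z)



/-- Component counter. -/
def cnt (t x : ℕ) : ℕ := if t < x then 1 else 0

lemma cnt_mono (t : ℕ) {x y : ℕ} (h : x ≤ y) : cnt t x ≤ cnt t y := by
  unfold cnt; split_ifs <;> omega

lemma cnt_self (x : ℕ) : cnt x x = 0 := by simp [cnt]

lemma cnt_lt {x y : ℕ} (h : x < y) : cnt x y = 1 := by simp [cnt, h]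

lemma cnt_le (t x : ℕ) : cnt t x ≤ 1 := by unfold cnt; split_ifs <;> omega

/-- Rank of `x` among `z, w, u, v`. -/
def rk (z w u v x : ℕ) : ℕ := cnt z x + cnt w x + cnt u x + cnt v x

lemma rk_mono (z w u v : ℕ) {x y : ℕ} (h : x ≤ y) :
    rk z w u v x ≤ rk z w u v y := by
  unfold rk
  have h1 := cnt_mono z h; have h2 := cnt_mono w h
  have h3 := cnt_mono u h; have h4 := cnt_mono v h
  omega

lemma rk_strict (z w u v : ℕ) {x y : ℕ} (hx : x = z ∨ x = w ∨ x = u ∨ x = v)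
    (h : x < y) : rk z w u v x < rk z w u v y := by
  have h1 := cnt_mono z (le_of_lt h); have h2 := cnt_mono w (le_of_lt h)
  have h3 := cnt_mono u (le_of_lt h); have h4 := cnt_mono v (le_of_lt h)
  unfold rk
  rcases hx with rfl | rfl | rfl | rfl <;>
    [have e0 := cnt_self x; have e0 := cnt_self x; have e0 := cnt_self x;
     have e0 := cnt_self x] <;> have e1 := cnt_lt h <;> omega

lemma rk_lt_iff (z w u v x y : ℕ) (hx : x = z ∨ x = w ∨ x = u ∨ x = v) :
    x < y ↔ rk z w u v x < rk z w u v y := by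
  constructor
  · exact rk_strict z w u v hx
  · intro h
    by_contra hc
    exact absurd (rk_mono z w u v (not_lt.mp hc)) (by omega)

lemma rk_le_iff (z w u v x y : ℕ) (hy : y = z ∨ y = w ∨ y = u ∨ y = v) :
    x ≤ y ↔ rk z w u v x ≤ rk z w u v y := by
  constructor
  · exact rk_mono z w u v
  · intro h
    by_contra hc
    exact absurd (rk_strict z w u v hy (not_le.mp hc)) (by omega)

lemma rk_lt4 (z w u v x : ℕ) (hx : x = z ∨ x = w ∨ x = u ∨ x = v) :
    rk z w u v x < 4 := by
  have h1 := cnt_le z x; have h2 := cnt_le w x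
  have h3 := cnt_le u x; have h4 := cnt_le v x
  unfold rk
  rcases hx with rfl | rfl | rfl | rfl <;> have e0 := cnt_self x <;> omega

lemma aux_bounded : ∀ a : ℕ, a < 4 → ∀ b : ℕ, b < 4 → ∀ c : ℕ, c < 4 → ∀ d : ℕ, d < 4 →
    ((if Qtri a c d then 1 else 0) : ℤ) - (if S2 a b c d then 1 else 0)
      = (if d > c ∧ c ≥ b ∧ b > a then (1 : ℤ) else 0)
        + (if a > d ∧ d > c ∧ c ≥ b then 1 else 0)
        + (if b > a ∧ a > d ∧ d > c then 1 else 0)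
        + (if c ≥ a ∧ a > b ∧ b > d then 1 else 0)
        - (if d ≥ a ∧ a > b ∧ b > c then 1 else 0)
        - (if a > c ∧ c > d ∧ d ≥ b then 1 else 0)
        - (if c > d ∧ d ≥ b ∧ b > a then 1 else 0)
        - (if b > a ∧ a > c ∧ c > d then 1 else 0) := by decide

/-- Pointwise identity for `S_2`: the difference between the quinv-triple indicator and
the `S_2`-quadruple indicator is the stated signed sum of eight order-pattern
indicators. -/
theorem S2_pointwise_indicator_identity
    (z w u v : ℕ) (hz : 0 < z) (hw : 0 < w) (hu : 0 < u) (hv : 0 < v) :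
    ((if Qtri z u v then 1 else 0) : ℤ) - (if S2 z w u v then 1 else 0)
      = (if v > u ∧ u ≥ w ∧ w > z then (1 : ℤ) else 0)
        + (if z > v ∧ v > u ∧ u ≥ w then 1 else 0)
        + (if w > z ∧ z > v ∧ v > u then 1 else 0)
        + (if u ≥ z ∧ z > w ∧ w > v then 1 else 0)
        - (if v ≥ z ∧ z > w ∧ w > u then 1 else 0)
        - (if z > u ∧ u > v ∧ v ≥ w then 1 else 0)
        - (if u > v ∧ v ≥ w ∧ w > z then 1 else 0)
        - (if w > z ∧ z > u ∧ u > v then 1 else 0) := by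
  have mem_z : z = z ∨ z = w ∨ z = u ∨ z = v := Or.inl rfl
  have mem_w : w = z ∨ w = w ∨ w = u ∨ w = v := Or.inr (Or.inl rfl)
  have mem_u : u = z ∨ u = w ∨ u = u ∨ u = v := Or.inr (Or.inr (Or.inl rfl))
  have mem_v : v = z ∨ v = w ∨ v = u ∨ v = v := Or.inr (Or.inr (Or.inr rfl))
  have hltzw : z < w ↔ rk z w u v z < rk z w u v w := rk_lt_iff z w u v z w mem_z
  have hlezw : z ≤ w ↔ rk z w u v z ≤ rk z w u v w := rk_le_iff z w u v z w mem_w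
  have hltzu : z < u ↔ rk z w u v z < rk z w u v u := rk_lt_iff z w u v z u mem_z
  have hlezu : z ≤ u ↔ rk z w u v z ≤ rk z w u v u := rk_le_iff z w u v z u mem_u
  have hltzv : z < v ↔ rk z w u v z < rk z w u v v := rk_lt_iff z w u v z v mem_z
  have hlezv : z ≤ v ↔ rk z w u v z ≤ rk z w u v v := rk_le_iff z w u v z v mem_v
  have hltwu : w < u ↔ rk z w u v w < rk z w u v u := rk_lt_iff z w u v w u mem_w
  have hlewu : w ≤ u ↔ rk z w u v w ≤ rk z w u v u := rk_le_iff z w u v w u mem_u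
  have hltwv : w < v ↔ rk z w u v w < rk z w u v v := rk_lt_iff z w u v w v mem_w
  have hlewv : w ≤ v ↔ rk z w u v w ≤ rk z w u v v := rk_le_iff z w u v w v mem_v
  have hltuv : u < v ↔ rk z w u v u < rk z w u v v := rk_lt_iff z w u v u v mem_u
  have hleuv : u ≤ v ↔ rk z w u v u ≤ rk z w u v v := rk_le_iff z w u v u v mem_v
  have hltwz : w < z ↔ rk z w u v w < rk z w u v z := rk_lt_iff z w u v w z mem_w
  have hlewz : w ≤ z ↔ rk z w u v w ≤ rk z w u v z := rk_le_iff z w u v w z mem_z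
  have hltuz : u < z ↔ rk z w u v u < rk z w u v z := rk_lt_iff z w u v u z mem_u
  have hleuz : u ≤ z ↔ rk z w u v u ≤ rk z w u v z := rk_le_iff z w u v u z mem_z
  have hltvz : v < z ↔ rk z w u v v < rk z w u v z := rk_lt_iff z w u v v z mem_v
  have hlevz : v ≤ z ↔ rk z w u v v ≤ rk z w u v z := rk_le_iff z w u v v z mem_z
  have hltuw : u < w ↔ rk z w u v u < rk z w u v w := rk_lt_iff z w u v u w mem_u
  have hleuw : u ≤ w ↔ rk z w u v u ≤ rk z w u v w := rk_le_iff z w u v u w mem_w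
  have hltvw : v < w ↔ rk z w u v v < rk z w u v w := rk_lt_iff z w u v v w mem_v
  have hlevw : v ≤ w ↔ rk z w u v v ≤ rk z w u v w := rk_le_iff z w u v v w mem_w
  have hltvu : v < u ↔ rk z w u v v < rk z w u v u := rk_lt_iff z w u v v u mem_v
  have hlevu : v ≤ u ↔ rk z w u v v ≤ rk z w u v u := rk_le_iff z w u v v u mem_u
  have heqzw : (z = w) ↔ (rk z w u v z = rk z w u v w) := by
    constructor
    · intro h; exact le_antisymm (hlezw.mp h.le) (hlewz.mp h.ge)
    · intro h; exact le_antisymm (hlezw.mpr h.le) (hlewz.mpr h.ge)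
  simp only [Qtri, S2, S2D, gt_iff_lt, ge_iff_le, heqzw, hltzw, hlezw, hltzu, hlezu, hltzv, hlezv, hltwu, hlewu, hltwv, hlewv, hltuv, hleuv, hltwz, hlewz, hltuz, hleuz, hltvz, hlevz, hltuw, hleuw, hltvw, hlevw, hltvu, hlevu]
  exact aux_bounded _ (rk_lt4 z w u v z mem_z) _ (rk_lt4 z w u v w mem_w)
    _ (rk_lt4 z w u v u mem_u) _ (rk_lt4 z w u v v mem_v)
end

section
/- Let q = (q_1,…,q_k) and a = (a_1,…,a_k) be sequences of positive integers with a_i ≤ q_i for all i, where a is weakly decreasing and q is weakly decreasing (so the pair forms a canonical two-row non-descent block). Then for any rearrangement w of q with a_i ≤ w_i for all i, #{(i,j): i<j, a_i > w_j} = #{(i,j): i<j, a_i > q_j}. -/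
/-- In a canonical two-row non-descent block (top row `a` weakly decreasing, every
column a non-descent), the number of pairs `i < j` with `a_i > w_j` is the same for any
rearrangement `w` of the bottom row `q` keeping all columns non-descents. -/
theorem nondescent_block_pair_count_invariant
    (k : ℕ) (a q w : Fin k → ℕ)
    (hpos : ∀ i, 0 < a i)
    (ha : ∀ i j : Fin k, i ≤ j → a j ≤ a i)
    (hq : ∀ i j : Fin k, i ≤ j → q j ≤ q i)
    (haq : ∀ i, a i ≤ q i)
    (e : Equiv.Perm (Fin k)) (hw : ∀ i, w i = q (e i))
    (haw : ∀ i, a i ≤ w i) :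
    (Finset.univ.filter (fun ij : Fin k × Fin k => ij.1 < ij.2 ∧ w ij.2 < a ij.1)).card
      = (Finset.univ.filter
          (fun ij : Fin k × Fin k => ij.1 < ij.2 ∧ q ij.2 < a ij.1)).card := by
  have h1 : ∀ i m : Fin k, q m < a i → i < m := by
    intro i m h
    by_contra hle
    push_neg at hle
    exact absurd (le_trans (ha m i hle) (haq m)) (not_le_of_gt h)
  have h2 : ∀ i m : Fin k, w m < a i → i < m := by
    intro i m h
    by_contra hle
    push_neg at hle
    exact absurd (le_trans (ha m i hle) (haw m)) (not_le_of_gt h)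
  apply Finset.card_bij' (fun ij _ => (ij.1, e ij.2)) (fun ij _ => (ij.1, e.symm ij.2))
  · intro ij hij
    simp only [Finset.mem_filter, Finset.mem_univ, true_and] at hij ⊢
    have hlt : q (e ij.2) < a ij.1 := by rw [← hw]; exact hij.2
    exact ⟨h1 _ _ hlt, hlt⟩
  · intro ij _; simp
  · intro ij _; simp
  · intro ij hij
    simp only [Finset.mem_filter, Finset.mem_univ, true_and] at hij ⊢
    have hlt : w (e.symm ij.2) < a ij.1 := by rw [hw, Equiv.apply_symm_apply]; exact hij.2
    exact ⟨h2 _ _ hlt, hlt⟩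
end

section
/- For the two-row canonical non-descent setting: let a = (a_1 ≥ ⋯ ≥ a_k) and q with a_i ≤ q_i, q weakly decreasing. For a rearrangement w of q with a_i ≤ w_i for all i, and with S = S_2, the number of S_2-quadruples of the two-row array (top row a, bottom row w) minus the number of S_2-quadruples of (top row a, bottom row q) equals coinv(w) = #{(i,j): i<j, w_i < w_j}. -/
lemma S2_char (z w u v : ℕ) (h1 : w ≤ z) (h2 : z ≤ u) (h3 : w ≤ v) :
    S2 z w u v ↔ (u < v ∨ (v < z ∧ v ≤ u)) := by
  simp only [S2, S2D]; omega

/-- In the two-row canonical non-descent setting (top row `a` weakly decreasing, bottom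
row `q` weakly decreasing, every column a non-descent), if `w` is a rearrangement of `q`
with all columns still non-descents, then the number of `S_2`-quadruples of the array
with bottom row `w` exceeds that with bottom row `q` exactly by
`coinv(w) = #{i<j : w_i < w_j}`. -/
theorem S2_quadruple_count_difference_eq_coinv
    (k : ℕ) (a q w : Fin k → ℕ)
    (hpos : ∀ i, 0 < a i)
    (ha : ∀ i j : Fin k, i ≤ j → a j ≤ a i)
    (hq : ∀ i j : Fin k, i ≤ j → q j ≤ q i)
    (haq : ∀ i, a i ≤ q i)
    (e : Equiv.Perm (Fin k)) (hw : ∀ i, w i = q (e i))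
    (haw : ∀ i, a i ≤ w i) :
    (Finset.univ.filter (fun ij : Fin k × Fin k =>
        ij.1 < ij.2 ∧ S2 (a ij.1) (a ij.2) (w ij.1) (w ij.2))).card
      = (Finset.univ.filter (fun ij : Fin k × Fin k =>
          ij.1 < ij.2 ∧ S2 (a ij.1) (a ij.2) (q ij.1) (q ij.2))).card
        + (Finset.univ.filter (fun ij : Fin k × Fin k =>
            ij.1 < ij.2 ∧ w ij.1 < w ij.2)).card := by
  classical
  have hlt : ∀ i j : Fin k, w j < a i → i < j := by
    intro i j h
    by_contra hc
    push_neg at hc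
    have := ha j i hc
    have := haw j
    omega
  have hltq : ∀ i j : Fin k, q j < a i → i < j := by
    intro i j h
    by_contra hc
    push_neg at hc
    have := ha j i hc
    have := haq j
    omega
  have hW : ∀ i j : Fin k,
      (i < j ∧ S2 (a i) (a j) (w i) (w j))
        ↔ ((i < j ∧ w i < w j) ∨ w j < a i) := by
    intro i j
    constructor
    · rintro ⟨hij, hs⟩
      rw [S2_char _ _ _ _ (ha i j hij.le) (haw i) (haw j)] at hs
      rcases hs with h | h
      · exact Or.inl ⟨hij, h⟩
      · exact Or.inr h.1
    · rintro (⟨hij, h⟩ | h)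
      · exact ⟨hij, (S2_char _ _ _ _ (ha i j hij.le) (haw i) (haw j)).2 (Or.inl h)⟩
      · have hij := hlt i j h
        have hwi := haw i
        refine ⟨hij, (S2_char _ _ _ _ (ha i j hij.le) (haw i) (haw j)).2 ?_⟩
        exact Or.inr ⟨h, by omega⟩
  have hQ : ∀ i j : Fin k,
      (i < j ∧ S2 (a i) (a j) (q i) (q j)) ↔ q j < a i := by
    intro i j
    constructor
    · rintro ⟨hij, hs⟩
      rw [S2_char _ _ _ _ (ha i j hij.le) (haq i) (haq j)] at hs
      rcases hs with h | h
      · exact absurd (hq i j hij.le) (by omega)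
      · exact h.1
    · intro h
      have hij := hltq i j h
      have h1 := haq i
      have h2 := hq i j hij.le
      exact ⟨hij, (S2_char _ _ _ _ (ha i j hij.le) (haq i) (haq j)).2
        (Or.inr ⟨h, by omega⟩)⟩
  have E1 : (Finset.univ.filter (fun ij : Fin k × Fin k =>
        ij.1 < ij.2 ∧ S2 (a ij.1) (a ij.2) (w ij.1) (w ij.2)))
      = Finset.univ.filter (fun ij : Fin k × Fin k =>
        (ij.1 < ij.2 ∧ w ij.1 < w ij.2) ∨ w ij.2 < a ij.1) :=
    Finset.filter_congr (fun ij _ => by simpa using hW ij.1 ij.2)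
  have E2 : (Finset.univ.filter (fun ij : Fin k × Fin k =>
        ij.1 < ij.2 ∧ S2 (a ij.1) (a ij.2) (q ij.1) (q ij.2)))
      = Finset.univ.filter (fun ij : Fin k × Fin k => q ij.2 < a ij.1) :=
    Finset.filter_congr (fun ij _ => by simpa using hQ ij.1 ij.2)
  rw [E1, E2, Finset.filter_or, Finset.card_union_of_disjoint]
  · rw [Nat.add_comm]
    congr 1
    apply Finset.card_bij' (fun (p : Fin k × Fin k) _ => (p.1, e p.2))
      (fun (p : Fin k × Fin k) _ => (p.1, e.symm p.2))
    · intro p hp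
      simp only [Finset.mem_filter, Finset.mem_univ, true_and] at hp ⊢
      rw [hw] at hp; exact hp
    · intro p hp
      simp only [Finset.mem_filter, Finset.mem_univ, true_and] at hp ⊢
      rw [hw]; simpa using hp
    · intro p _; simp
    · intro p _; simp
  · rw [Finset.disjoint_left]
    rintro ⟨i, j⟩ h1 h2
    simp only [Finset.mem_filter, Finset.mem_univ, true_and] at h1 h2
    have := haw i
    omega
end
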